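/- arXiv:2111.12930 — 4 statements merged into one kernel-verified Lean document; each statement's English description precedes it below -/
import Mathlib

section
/- Let f and g be monic polynomials over a field K with deg f = m ≥ 1 and deg g = l ≥ 1, and suppose f ∘ g is separable over K. Then the Galois group of f ∘ g over K is isomorphic to a subgroup of the wreath product S_l ≀ G, where G is the Galois group of f over K. -/
open Polynomial

/-- The automorphism of a direct power `X → H` induced by a permutation of the
indexing set `X` (permuting the coordinates). -/
def permArrowAut {X H : Type*} [Group H] (σ : Equiv.Perm X) : MulAut (X → H) where
  toFun h := h ∘ σ.symm
  invFun h := h ∘ σ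
  left_inv h := by ext x; simp
  right_inv h := by ext x; simp
  map_mul' h₁ h₂ := rfl

/-- The action of a permutation group on the direct power `X → H`, as a homomorphism
into the automorphism group; this is the structural homomorphism of the wreath
product `H ≀ (Perm X) = (X → H) ⋊ Perm X`. -/
def permArrowHom (X H : Type*) [Group H] : Equiv.Perm X →* MulAut (X → H) where
  toFun := permArrowAut
  map_one' := by ext h x; rfl
  map_mul' σ τ := by ext h x; rfl

attribute [local instance 2000] Polynomial.Gal.galAction

namespace GalCompWreathAux

noncomputable section

/-- If `p ∘ q` splits (over a field) and `q` is nonconstant, then `p` splits. -/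
theorem splits_of_comp_splits {L : Type*} [Field L] (q : L[X]) (hq : 0 < q.natDegree) :
    ∀ (n : ℕ) (p : L[X]), p.natDegree ≤ n → (p.comp q).Splits →
      p.Splits := by
  intro n
  induction n with
  | zero => exact fun p hp _ => Splits.of_natDegree_le_one (le_trans hp (Nat.zero_le 1))
  | succ n ih =>
    intro p hp hs
    rcases Nat.eq_zero_or_pos p.natDegree with h0 | h0
    · exact Splits.of_natDegree_le_one (by omega)
    · have hc : (p.comp q).natDegree = p.natDegree * q.natDegree := natDegree_comp
      have hpos : 0 < p.natDegree * q.natDegree := Nat.mul_pos h0 hq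
      have hcompne : p.comp q ≠ 0 := fun h => by rw [h, natDegree_zero] at hc; omega
      have hdeg : (p.comp q).degree ≠ 0 := by
        rw [degree_eq_natDegree hcompne]
        exact_mod_cast (show (p.comp q).natDegree ≠ 0 by omega)
      obtain ⟨α, hα⟩ := Splits.exists_eval_eq_zero hs hdeg
      have hroot : eval (eval α q) p = 0 := by
        rw [← eval_comp]
        exact hα
      obtain ⟨r, hr⟩ := dvd_iff_isRoot.mpr hroot
      have hpne : p ≠ 0 := fun h => by rw [h, natDegree_zero] at h0; omega
      have hrne : r ≠ 0 := fun h => hpne (by rw [hr, h, mul_zero])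
      have hdr : r.natDegree ≤ n := by
        have hnm := natDegree_mul (X_sub_C_ne_zero (eval α q)) hrne
        rw [← hr, natDegree_X_sub_C] at hnm
        omega
      have hcomp2 : p.comp q = (q - C (eval α q)) * (r.comp q) := by
        rw [hr, mul_comp, sub_comp, X_comp, C_comp]
      have hsplit2 := And.intro trivial (Splits.of_dvd hs hcompne
        (show r.comp q ∣ p.comp q by rw [hcomp2]; exact dvd_mul_left (r.comp q) (q - C (eval α q))))
      rw [hr]
      exact (Splits.X_sub_C _).mul (ih r hdr hsplit2.2)

variable {K : Type*} [Field K] (f g : K[X])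

section

variable [Fact ((f.map (algebraMap K f.SplittingField)).Splits)]
  [Fact ((f.map (algebraMap K (f.comp g).SplittingField)).Splits)]

/-- The roots of `f` in the splitting field of `f ∘ g`, indexed by the roots of `f`
in its own splitting field (compatibly with the `Gal f`-actions). -/
def iota (β : f.rootSet f.SplittingField) : (f.comp g).SplittingField :=
  ((Gal.rootsEquivRoots f (f.comp g).SplittingField)
    ((Gal.rootsEquivRoots f f.SplittingField).symm β) : (f.comp g).SplittingField)

theorem iota_keyA (σ : (f.comp g).SplittingField ≃ₐ[K] (f.comp g).SplittingField)
    (β : f.rootSet f.SplittingField) :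
    σ (iota f g β) = iota f g (Gal.restrict f (f.comp g).SplittingField σ • β) := by
  have h1 := Gal.restrict_smul (p := f) σ
    ((Gal.rootsEquivRoots f (f.comp g).SplittingField)
      ((Gal.rootsEquivRoots f f.SplittingField).symm β))
  rw [iota, ← h1, Gal.smul_def, Equiv.symm_apply_apply, iota, Gal.smul_def,
    Equiv.symm_apply_apply]

theorem iota_aeval (β : f.rootSet f.SplittingField) : aeval (iota f g β) f = 0 :=
  (Polynomial.mem_rootSet.mp ((Gal.rootsEquivRoots f (f.comp g).SplittingField)
    ((Gal.rootsEquivRoots f f.SplittingField).symm β)).2).2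

/-- The fiber polynomial `g - β` over a root `β` of `f`. -/
def P (β : f.rootSet f.SplittingField) : ((f.comp g).SplittingField)[X] :=
  g.map (algebraMap K (f.comp g).SplittingField) - C (iota f g β)

theorem P_dvd (β : f.rootSet f.SplittingField) :
    P f g β ∣ (f.comp g).map (algebraMap K (f.comp g).SplittingField) := by
  have hroot : IsRoot (f.map (algebraMap K (f.comp g).SplittingField)) (iota f g β) := by
    rw [IsRoot, eval_map, ← aeval_def, iota_aeval]
  obtain ⟨r, hr⟩ := dvd_iff_isRoot.mpr hroot
  refine ⟨r.comp (g.map (algebraMap K (f.comp g).SplittingField)), ?_⟩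
  rw [Polynomial.map_comp, hr, mul_comp, sub_comp, X_comp, C_comp, P]

theorem P_natDegree (β : f.rootSet f.SplittingField) : (P f g β).natDegree = g.natDegree := by
  rw [P, natDegree_sub_C, natDegree_map]

theorem P_ne_zero (hgd : 1 ≤ g.natDegree) (β : f.rootSet f.SplittingField) :
    P f g β ≠ 0 := fun h => by
  have h2 := P_natDegree f g β
  rw [h, natDegree_zero] at h2
  omega

theorem comp_map_ne_zero (hf : f.Monic) (hg : g.Monic) (hgd : 1 ≤ g.natDegree) :
    (f.comp g).map (algebraMap K (f.comp g).SplittingField) ≠ 0 :=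
  ((hf.comp hg (by omega)).map _).ne_zero

theorem P_splits (hf : f.Monic) (hg : g.Monic) (hgd : 1 ≤ g.natDegree)
    (β : f.rootSet f.SplittingField) :
    (P f g β).Splits :=
  Splits.of_dvd (SplittingField.splits _) (comp_map_ne_zero f g hf hg hgd) (P_dvd f g β)

theorem P_sep (hsep : (f.comp g).Separable) (β : f.rootSet f.SplittingField) :
    (P f g β).Separable :=
  (hsep.map).of_dvd (P_dvd f g β)

/-- The fiber of roots of `f ∘ g` above a root `β` of `f`. -/
def Fb (β : f.rootSet f.SplittingField) : Finset ((f.comp g).SplittingField) :=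
  @Multiset.toFinset _ (Classical.decEq _) (P f g β).roots

theorem Fb_card (hf : f.Monic) (hg : g.Monic) (hgd : 1 ≤ g.natDegree)
    (hsep : (f.comp g).Separable) (β : f.rootSet f.SplittingField) :
    (Fb f g β).card = g.natDegree := by
  letI := Classical.decEq ((f.comp g).SplittingField)
  rw [Fb, Multiset.toFinset_card_of_nodup (nodup_roots (P_sep f g hsep β)),
    splits_iff_card_roots.mp (P_splits f g hf hg hgd β), P_natDegree]

theorem mem_Fb (hgd : 1 ≤ g.natDegree) (β : f.rootSet f.SplittingField)
    (α : (f.comp g).SplittingField) :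
    α ∈ Fb f g β ↔ aeval α g = iota f g β := by
  letI := Classical.decEq ((f.comp g).SplittingField)
  rw [Fb, Multiset.mem_toFinset, mem_roots (P_ne_zero f g hgd β), IsRoot, P, eval_sub,
    eval_C, sub_eq_zero, eval_map, ← aeval_def]

variable (hf : f.Monic) (hg : g.Monic) (hgd : 1 ≤ g.natDegree) (hsep : (f.comp g).Separable)

/-- An enumeration of each fiber by `Fin l`. -/
def eFb (β : f.rootSet f.SplittingField) : Fin g.natDegree ≃ {x // x ∈ Fb f g β} :=
  ((Fb f g β).equivFin.trans (finCongr (Fb_card f g hf hg hgd hsep β))).symm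

/-- The elements of the fiber above `β`, enumerated. -/
def uF (β : f.rootSet f.SplittingField) (j : Fin g.natDegree) : (f.comp g).SplittingField :=
  ↑(eFb f g hf hg hgd hsep β j)

theorem uF_inj (β : f.rootSet f.SplittingField) :
    Function.Injective (uF f g hf hg hgd hsep β) :=
  fun j k h => (eFb f g hf hg hgd hsep β).injective (Subtype.ext h)

theorem uF_mem (β : f.rootSet f.SplittingField) (j : Fin g.natDegree) :
    uF f g hf hg hgd hsep β j ∈ Fb f g β :=
  (eFb f g hf hg hgd hsep β j).2

theorem uF_aeval (β : f.rootSet f.SplittingField) (j : Fin g.natDegree) :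
    aeval (uF f g hf hg hgd hsep β j) g = iota f g β :=
  (mem_Fb f g hgd β _).mp (uF_mem f g hf hg hgd hsep β j)

theorem smul_uF_mem (σ : (f.comp g).SplittingField ≃ₐ[K] (f.comp g).SplittingField)
    (β : f.rootSet f.SplittingField) (j : Fin g.natDegree) :
    σ (uF f g hf hg hgd hsep β j) ∈
      Fb f g (Gal.restrict f (f.comp g).SplittingField σ • β) := by
  rw [mem_Fb f g hgd, aeval_algHom_apply, uF_aeval, iota_keyA]

/-- The permutation of the fiber above `β` induced by `σ`. -/
def aPerm (σ : (f.comp g).SplittingField ≃ₐ[K] (f.comp g).SplittingField)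
    (β : f.rootSet f.SplittingField) : Equiv.Perm (Fin g.natDegree) :=
  Equiv.ofBijective (fun j => (eFb f g hf hg hgd hsep β).symm
      ⟨σ (uF f g hf hg hgd hsep ((Gal.restrict f (f.comp g).SplittingField σ)⁻¹ • β) j), by
        have h := smul_uF_mem f g hf hg hgd hsep σ
          ((Gal.restrict f (f.comp g).SplittingField σ)⁻¹ • β) j
        rwa [smul_inv_smul] at h⟩)
    (Finite.injective_iff_bijective.mp (fun j k h => by
      have h2 := congrArg (fun t => ((eFb f g hf hg hgd hsep β) t :
        (f.comp g).SplittingField)) h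
      simp only [Equiv.apply_symm_apply] at h2
      exact uF_inj f g hf hg hgd hsep _ (σ.injective h2)))

theorem uF_aPerm (σ : (f.comp g).SplittingField ≃ₐ[K] (f.comp g).SplittingField)
    (β : f.rootSet f.SplittingField) (j : Fin g.natDegree) :
    uF f g hf hg hgd hsep β (aPerm f g hf hg hgd hsep σ β j) =
      σ (uF f g hf hg hgd hsep ((Gal.restrict f (f.comp g).SplittingField σ)⁻¹ • β) j) := by
  simp only [uF, aPerm, Equiv.ofBijective_apply, Equiv.apply_symm_apply]

end

end

end GalCompWreathAux

set_option maxHeartbeats 1000000 in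
open GalCompWreathAux in
/-- If `f` and `g` are monic polynomials over a field `K` with `deg f = m ≥ 1`,
`deg g = l ≥ 1`, and `f ∘ g` is separable over `K`, then the Galois group of `f ∘ g`
over `K` embeds into the wreath product `S_l ≀ G`, where `G = Gal(f/K)` acts on the
`m` roots of `f`; the wreath product is realized as the semidirect product
`(roots of f → S_l) ⋊ G`. -/
theorem gal_comp_embeds_in_wreath {K : Type*} [Field K] (f g : K[X])
    (hf : f.Monic) (hg : g.Monic) (hfd : 1 ≤ f.natDegree) (hgd : 1 ≤ g.natDegree)
    (hsep : (f.comp g).Separable) :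
    letI : Fact ((f.map (algebraMap K f.SplittingField)).Splits) :=
      ⟨Polynomial.SplittingField.splits f⟩
    ∃ φ : (f.comp g).Gal →*
        SemidirectProduct ((f.rootSet f.SplittingField) → Equiv.Perm (Fin g.natDegree))
          f.Gal
          ((permArrowHom (f.rootSet f.SplittingField) (Equiv.Perm (Fin g.natDegree))).comp
            (Polynomial.Gal.galActionHom f f.SplittingField)),
      Function.Injective φ := by
  letI : Fact ((f.map (algebraMap K f.SplittingField)).Splits) :=
    ⟨Polynomial.SplittingField.splits f⟩
  have hfsplitL : (f.map (algebraMap K (f.comp g).SplittingField)).Splits := by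
    refine splits_of_comp_splits (g.map (algebraMap K (f.comp g).SplittingField))
      (by rw [natDegree_map]; omega) (f.map (algebraMap K (f.comp g).SplittingField)).natDegree
      _ le_rfl ?_
    rw [← Polynomial.map_comp]
    exact SplittingField.splits _
  letI : Fact ((f.map (algebraMap K (f.comp g).SplittingField)).Splits) := ⟨hfsplitL⟩
  refine ⟨MonoidHom.mk' (fun σ => ⟨fun β => aPerm f g hf hg hgd hsep σ β,
      Gal.restrict f (f.comp g).SplittingField σ⟩) ?_, ?_⟩
  · intro σ τ
    refine SemidirectProduct.ext ?_ (map_mul (Gal.restrict f (f.comp g).SplittingField) σ τ)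
    funext β
    refine Equiv.ext fun j => ?_
    show aPerm f g hf hg hgd hsep (σ * τ) β j =
      aPerm f g hf hg hgd hsep σ β (aPerm f g hf hg hgd hsep τ
        ((Gal.restrict f (f.comp g).SplittingField σ)⁻¹ • β) j)
    apply uF_inj f g hf hg hgd hsep β
    erw [uF_aPerm, uF_aPerm, uF_aPerm, map_mul, mul_inv_rev, mul_smul]
    rfl
  · rw [injective_iff_map_eq_one]
    intro σ hσ
    have hright : Gal.restrict f (f.comp g).SplittingField σ = 1 := by
      have h := congrArg SemidirectProduct.right hσ
      simpa using h
    have hleft : ∀ β, aPerm f g hf hg hgd hsep σ β = 1 := by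
      intro β
      have h := congrFun (congrArg SemidirectProduct.left hσ) β
      simpa using h
    have hfix : ∀ β j, σ (uF f g hf hg hgd hsep β j) = uF f g hf hg hgd hsep β j := by
      intro β j
      have h1 := uF_aPerm f g hf hg hgd hsep σ β j
      rw [hleft β, hright, inv_one, one_smul] at h1
      exact h1.symm
    have hfix' : ∀ x ∈ (f.comp g).rootSet (f.comp g).SplittingField, σ x = x := by
      intro x hx
      have hc : aeval x g ∈ f.rootSet (f.comp g).SplittingField := by
        rw [mem_rootSet]
        refine ⟨hf.ne_zero, ?_⟩
        have h2 := (mem_rootSet.mp hx).2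
        rwa [aeval_comp] at h2
      set β : f.rootSet f.SplittingField := (Gal.rootsEquivRoots f f.SplittingField)
        ((Gal.rootsEquivRoots f (f.comp g).SplittingField).symm ⟨aeval x g, hc⟩) with hβdef
      have hβ : iota f g β = aeval x g := by
        simp [iota, hβdef]
      have hxFb : x ∈ Fb f g β := (mem_Fb f g hgd β x).mpr hβ.symm
      have hu : uF f g hf hg hgd hsep β
          ((eFb f g hf hg hgd hsep β).symm ⟨x, hxFb⟩) = x := by
        rw [uF, Equiv.apply_symm_apply]
      rw [← hu]
      exact hfix β _
    exact Polynomial.Gal.ext (p := f.comp g) (σ := σ) (τ := (1 : (f.comp g).Gal)) hfix'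
end

section
/- (Capelli's Lemma, irreducibility part) Let K be a field and f, g ∈ K[x]. Then f(g(x)) is irreducible in K[x] if and only if f is irreducible in K[x] and for every root β of f (in an algebraic closure), g(x) − β is irreducible in K(β)[x]. -/
open Polynomial IntermediateField

theorem capelli_minpoly_deg {F E : Type*} [Field F] [Field E] [Algebra F E] {p : F[X]}
    (hp : Irreducible p) {x : E} (hx : aeval x p = 0) :
    (minpoly F x).natDegree = p.natDegree := by
  rw [← minpoly.eq_of_irreducible hp hx, natDegree_mul hp.ne_zero, natDegree_C, add_zero]
  exact C_ne_zero.2 (inv_ne_zero (leadingCoeff_ne_zero.2 hp.ne_zero))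

theorem capelli_degpos {K : Type*} [Field K] {a : K[X]} (h0 : a ≠ 0) (hu : ¬ IsUnit a) :
    0 < a.natDegree := by
  by_contra h
  push_neg at h
  rw [eq_C_of_natDegree_eq_zero (Nat.eq_zero_of_le_zero h)] at h0 hu
  exact hu (isUnit_C.2 (isUnit_iff_ne_zero.2 (fun hc => h0 (by rw [hc, map_zero]))))

theorem capelli_tower {K : Type*} [Field K] (g : K[X]) (α β : AlgebraicClosure K)
    (hβ : aeval α g = β) :
    (minpoly K α).natDegree
      = (minpoly K β).natDegree * (minpoly K⟮β⟯ α).natDegree := by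
  subst hβ
  set β := aeval α g with hβ
  have hα : IsIntegral K α := Algebra.IsIntegral.isIntegral α
  have hβi : IsIntegral K β := Algebra.IsIntegral.isIntegral β
  have hαβ : IsIntegral K⟮β⟯ α := hα.tower_top
  have hβmem : β ∈ K⟮α⟯ := by
    have h1 := Polynomial.aeval_algHom_apply (IsScalarTower.toAlgHom K K⟮α⟯ (AlgebraicClosure K))
      (AdjoinSimple.gen K α) g
    rw [hβ, ← AdjoinSimple.algebraMap_gen K α]
    rw [show (IsScalarTower.toAlgHom K K⟮α⟯ (AlgebraicClosure K)) (AdjoinSimple.gen K α)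
        = algebraMap K⟮α⟯ (AlgebraicClosure K) (AdjoinSimple.gen K α) from rfl] at h1
    rw [h1]
    exact Subtype.coe_prop _
  have key : IntermediateField.restrictScalars K K⟮β⟯⟮α⟯ = K⟮α⟯ := by
    rw [adjoin_simple_adjoin_simple]
    apply le_antisymm
    · exact adjoin_le_iff.2 (Set.insert_subset hβmem
        (Set.singleton_subset_iff.2 (mem_adjoin_simple_self K α)))
    · exact adjoin_le_iff.2 (Set.singleton_subset_iff.2 (subset_adjoin K _ (by simp)))
  rw [← IntermediateField.adjoin.finrank hα, ← IntermediateField.adjoin.finrank hβi,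
    ← IntermediateField.adjoin.finrank hαβ, ← key]
  exact (Module.finrank_mul_finrank K K⟮β⟯ K⟮β⟯⟮α⟯).symm

/-- Capelli's Lemma, irreducibility part: `f(g(x))` is irreducible over `K` iff `f` is
irreducible over `K` and, for every root `β` of `f` in an algebraic closure of `K`,
`g(x) - β` is irreducible over `K(β)`. -/
theorem capelli_irreducible {K : Type*} [Field K] (f g : K[X]) (hf : f.natDegree ≠ 0) :
    Irreducible (f.comp g) ↔
      Irreducible f ∧
        ∀ β ∈ f.rootSet (AlgebraicClosure K),
          Irreducible (g.map (algebraMap K K⟮β⟯) -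
            Polynomial.C (IntermediateField.AdjoinSimple.gen K β)) := by
  have hf0 : f ≠ 0 := fun h => hf (by simp [h])
  have hfpos : 0 < f.natDegree := Nat.pos_of_ne_zero hf
  constructor
  · intro H
    have hfgpos : 0 < (f.comp g).natDegree := H.natDegree_pos
    rw [natDegree_comp] at hfgpos
    have hgpos : 0 < g.natDegree := Nat.pos_of_mul_pos_left (by rwa [Nat.mul_comm] at hfgpos)
    have hfirr : Irreducible f := by
      refine ⟨fun hu => hf (natDegree_eq_zero_of_isUnit hu), fun a b hab => ?_⟩
      have h2 : f.comp g = (a.comp g) * (b.comp g) := by rw [hab, mul_comp]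
      have key : ∀ c : K[X], c ≠ 0 → IsUnit (c.comp g) → IsUnit c := by
        intro c hc0 hcu
        have hc : c.natDegree = 0 := by
          have h3 := natDegree_eq_zero_of_isUnit hcu
          rw [natDegree_comp] at h3
          exact (Nat.mul_eq_zero.1 h3).resolve_right (by omega)
        rw [eq_C_of_natDegree_eq_zero hc]
        exact isUnit_C.2 (isUnit_iff_ne_zero.2
          (fun hc' => hc0 (by rw [eq_C_of_natDegree_eq_zero hc, hc', map_zero])))
      have ha0 : a ≠ 0 := fun h => hf0 (by rw [hab, h, zero_mul])
      have hb0 : b ≠ 0 := fun h => hf0 (by rw [hab, h, mul_zero])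
      exact (H.isUnit_or_isUnit h2).imp (key a ha0) (key b hb0)
    refine ⟨hfirr, fun β hβ => ?_⟩
    have hβ0 : aeval β f = 0 := (mem_rootSet.1 hβ).2
    have hdegh : (g.map (algebraMap K K⟮β⟯) -
        Polynomial.C (IntermediateField.AdjoinSimple.gen K β)).natDegree = g.natDegree := by
      rw [natDegree_sub_C, natDegree_map]
    have hh0 : (g.map (algebraMap K K⟮β⟯) -
        Polynomial.C (IntermediateField.AdjoinSimple.gen K β)) ≠ 0 := fun e => by
      rw [e, natDegree_zero] at hdegh; omega
    refine ⟨fun hu => ?_, fun a b hab => ?_⟩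
    · have := natDegree_eq_zero_of_isUnit hu; omega
    by_contra hcon
    push_neg at hcon
    obtain ⟨hua, hub⟩ := hcon
    have ha0 : a ≠ 0 := fun e => hh0 (by rw [hab, e, zero_mul])
    have hb0 : b ≠ 0 := fun e => hh0 (by rw [hab, e, mul_zero])
    have hapos := capelli_degpos ha0 hua
    have hbpos := capelli_degpos hb0 hub
    have hsum : a.natDegree + b.natDegree = g.natDegree := by
      rw [← natDegree_mul ha0 hb0, ← hab, hdegh]
    obtain ⟨α, hαroot⟩ := IsAlgClosed.exists_root
      (a.map (algebraMap K⟮β⟯ (AlgebraicClosure K)))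
      (by rw [degree_map]; exact (natDegree_pos_iff_degree_pos.1 hapos).ne')
    have haα : aeval α a = 0 := by rwa [aeval_def, ← eval_map]
    have hαh : aeval α (g.map (algebraMap K K⟮β⟯) -
        Polynomial.C (IntermediateField.AdjoinSimple.gen K β)) = 0 := by
      rw [hab, map_mul, haα, zero_mul]
    have hgβ : aeval α g = β := by
      rw [map_sub, aeval_map_algebraMap, aeval_C, AdjoinSimple.algebraMap_gen] at hαh
      exact sub_eq_zero.1 hαh
    have hαfg : aeval α (f.comp g) = 0 := by
      rw [aeval_comp (x := α), hgβ, hβ0]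
    have e1 : (minpoly K α).natDegree = f.natDegree * g.natDegree := by
      rw [capelli_minpoly_deg H hαfg, natDegree_comp]
    have e2 : (minpoly K β).natDegree = f.natDegree := capelli_minpoly_deg hfirr hβ0
    have e3 : (minpoly K⟮β⟯ α).natDegree ≤ a.natDegree :=
      natDegree_le_of_dvd (minpoly.dvd _ _ haα) ha0
    have et := capelli_tower g α β hgβ
    rw [e1, e2] at et
    have hd : g.natDegree = (minpoly K⟮β⟯ α).natDegree :=
      Nat.eq_of_mul_eq_mul_left hfpos et
    omega
  · rintro ⟨hfirr, hall⟩
    obtain ⟨β₀, hβ₀⟩ := IsAlgClosed.exists_aeval_eq_zero (AlgebraicClosure K) f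
      (by rw [degree_eq_natDegree hf0]; exact_mod_cast (Nat.cast_pos.2 hfpos).ne' )
    have hβ₀mem : β₀ ∈ f.rootSet (AlgebraicClosure K) := mem_rootSet.2 ⟨hf0, hβ₀⟩
    have hgpos : 0 < g.natDegree := by
      by_contra h
      push_neg at h
      have h0 := (hall β₀ hβ₀mem).natDegree_pos
      rw [natDegree_sub_C, natDegree_map] at h0
      omega
    have hfgpos : 0 < (f.comp g).natDegree := by
      rw [natDegree_comp]; exact Nat.mul_pos hfpos hgpos
    have hfg0 : f.comp g ≠ 0 := fun e => by rw [e, natDegree_zero] at hfgpos; omega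
    refine ⟨fun hu => ?_, fun a b hab => ?_⟩
    · have := natDegree_eq_zero_of_isUnit hu; omega
    by_contra hcon
    push_neg at hcon
    obtain ⟨hua, hub⟩ := hcon
    have ha0 : a ≠ 0 := fun e => hfg0 (by rw [hab, e, zero_mul])
    have hb0 : b ≠ 0 := fun e => hfg0 (by rw [hab, e, mul_zero])
    have hapos := capelli_degpos ha0 hua
    have hbpos := capelli_degpos hb0 hub
    have hsum : a.natDegree + b.natDegree = f.natDegree * g.natDegree := by
      rw [← natDegree_mul ha0 hb0, ← hab, natDegree_comp]
    obtain ⟨α, hαroot⟩ := IsAlgClosed.exists_root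
      (a.map (algebraMap K (AlgebraicClosure K)))
      (by rw [degree_map]; exact (natDegree_pos_iff_degree_pos.1 hapos).ne')
    have haα : aeval α a = 0 := by rwa [aeval_def, ← eval_map]
    have hαfg : aeval α (f.comp g) = 0 := by rw [hab, map_mul, haα, zero_mul]
    have hβf : aeval (aeval α g) f = 0 := by rw [← aeval_comp (x := α)]; exact hαfg
    have hβmem : aeval α g ∈ f.rootSet (AlgebraicClosure K) := mem_rootSet.2 ⟨hf0, hβf⟩
    have hirr := hall _ hβmem
    have hαh : aeval α (g.map (algebraMap K K⟮aeval α g⟯) -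
        Polynomial.C (IntermediateField.AdjoinSimple.gen K (aeval α g))) = 0 := by
      rw [map_sub, aeval_map_algebraMap, aeval_C, AdjoinSimple.algebraMap_gen, sub_self]
    have e2 : (minpoly K (aeval α g)).natDegree = f.natDegree := capelli_minpoly_deg hfirr hβf
    have e3 : (minpoly K⟮aeval α g⟯ α).natDegree = g.natDegree := by
      rw [capelli_minpoly_deg hirr hαh, natDegree_sub_C, natDegree_map]
    have et := capelli_tower g α _ rfl
    rw [e2, e3] at et
    have e4 : (minpoly K α).natDegree ≤ a.natDegree :=
      natDegree_le_of_dvd (minpoly.dvd _ _ haα) ha0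
    omega
end

section
/- A finite permutation group G ⊆ S_n acting on n points (n ≥ 2) that is primitive and contains a transposition is the full symmetric group S_n. -/
/-- A subgroup `G` of a symmetric group is transitive if any point can be moved to
any other point by some element of `G`. -/
def PermSubgroup.IsTransitive {α : Type*} (G : Subgroup (Equiv.Perm α)) : Prop :=
  ∀ x y : α, ∃ σ ∈ G, σ x = y

/-- A block of a permutation group: each element of `G` either fixes the set `B`
setwise or moves it to a disjoint set. -/
def PermSubgroup.IsBlock {α : Type*} (G : Subgroup (Equiv.Perm α)) (B : Set α) : Prop :=
  ∀ σ ∈ G, (σ : Equiv.Perm α) '' B = B ∨ Disjoint ((σ : Equiv.Perm α) '' B) B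

/-- A permutation group is primitive if it is transitive and preserves no nontrivial
partition, i.e. every block is a singleton (or empty) or the whole set. -/
def PermSubgroup.IsPrimitive {α : Type*} (G : Subgroup (Equiv.Perm α)) : Prop :=
  PermSubgroup.IsTransitive G ∧
    ∀ B : Set α, PermSubgroup.IsBlock G B → B.Subsingleton ∨ B = Set.univ

/-- A primitive finite permutation group on at least 2 points containing a transposition
is the full symmetric group. -/
theorem primitive_with_transposition_eq_top {α : Type*} [Fintype α] [DecidableEq α]
    (G : Subgroup (Equiv.Perm α)) (hcard : 2 ≤ Fintype.card α)
    (hprim : PermSubgroup.IsPrimitive G)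
    (hswap : ∃ σ ∈ G, Equiv.Perm.IsSwap σ) :
    G = ⊤ := by
  obtain ⟨σ0, hσ0G, a, b, hab, rfl⟩ := hswap
  -- the relation: connected by a swap in G
  set r : α → α → Prop := fun x y => x = y ∨ Equiv.swap x y ∈ G with hr
  have rsymm : ∀ {x y}, r x y → r y x := by
    rintro x y (rfl | h)
    · exact Or.inl rfl
    · right; rwa [Equiv.swap_comm]
  have rtrans : ∀ {x y z}, r x y → r y z → r x z := by
    rintro x y z (rfl | hxy) hyz
    · exact hyz
    rcases hyz with rfl | hyz
    · exact Or.inr hxy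
    by_cases hxz : x = z
    · exact Or.inl hxz
    right
    by_cases hxy' : x = y
    · subst hxy'; exact hyz
    have hconj : Equiv.swap y z * Equiv.swap x y * (Equiv.swap y z)⁻¹ ∈ G :=
      G.mul_mem (G.mul_mem hyz hxy) (G.inv_mem hyz)
    have : Equiv.swap x z = Equiv.swap y z * Equiv.swap x y * (Equiv.swap y z)⁻¹ := by
      rw [← Equiv.swap_apply_apply]
      congr 1
      · rw [Equiv.swap_apply_of_ne_of_ne hxy' hxz]
      · simp
    rw [this]; exact hconj
  have requiv : ∀ {σ : Equiv.Perm α}, σ ∈ G → ∀ {x y}, r x y → r (σ x) (σ y) := by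
    rintro σ hσ x y (rfl | h)
    · exact Or.inl rfl
    · right
      rw [Equiv.swap_apply_apply]
      exact G.mul_mem (G.mul_mem hσ h) (G.inv_mem hσ)
  -- the block
  set B : Set α := {y | r a y} with hB
  have hBblock : PermSubgroup.IsBlock G B := by
    intro σ hσ
    by_cases hmem : σ a ∈ B
    · left
      ext y
      constructor
      · rintro ⟨x, hx, rfl⟩
        exact rtrans hmem (requiv hσ hx)
      · intro hy
        refine ⟨σ⁻¹ y, ?_, by simp⟩
        have h2 : r (σ⁻¹ (σ a)) (σ⁻¹ y) := requiv (G.inv_mem hσ) (rtrans (rsymm hmem) hy)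
        simp at h2; exact h2
    · right
      rw [Set.disjoint_left]
      rintro y ⟨x, hx, rfl⟩ hy
      exact hmem (rtrans hy (rsymm (requiv hσ hx)))
  -- B is not a subsingleton: a, b ∈ B, a ≠ b
  have haB : a ∈ B := Or.inl rfl
  have hbB : b ∈ B := Or.inr hσ0G
  have hBuniv : B = Set.univ := by
    rcases hprim.2 B hBblock with hss | h
    · exact absurd (hss haB hbB) hab
    · exact h
  -- all swaps with a are in G, hence all swaps
  have hswapall : ∀ x y : α, x ≠ y → Equiv.swap x y ∈ G := by
    intro x y hxy
    have hx : r a x := by have : x ∈ B := by rw [hBuniv]; trivial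
                          exact this
    have hy : r a y := by have : y ∈ B := by rw [hBuniv]; trivial
                          exact this
    rcases rtrans (rsymm hx) hy with h | h
    · exact absurd h hxy
    · exact h
  have : Subgroup.closure {σ : Equiv.Perm α | σ.IsSwap} ≤ G := by
    rw [Subgroup.closure_le]
    rintro σ ⟨x, y, hxy, rfl⟩
    exact hswapall x y hxy
  rw [eq_top_iff, ← Equiv.Perm.closure_isSwap]
  exact this
end

section
/- Let K be a field, a₁,…,aₙ algebraically independent indeterminates over K, L an extension field of K, and φ: K(a₁,…,aₙ) → L a K-algebra homomorphism (specialization). If g ∈ K(a₁,…,aₙ)[x] is such that the specialized polynomial φ̃(g) is separable over L, then Gal(φ̃(g)/L) is isomorphic to a subgroup of Gal(g/K(a₁,…,aₙ)). -/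
open Polynomial

/-- (Odoni, Lemma 2.4) Let `K` be a field, `a₁,…,aₙ` algebraically independent
indeterminates over `K` (so `K(a₁,…,aₙ)` is the field of fractions of the polynomial
ring), `L` an extension field and `φ : K(a₁,…,aₙ) → L` a `K`-algebra homomorphism.
If `g` is a polynomial over `K(a₁,…,aₙ)` whose specialization `φ̃(g)` is separable over
`L`, then `Gal(φ̃(g)/L)` is isomorphic to a subgroup of `Gal(g/K(a₁,…,aₙ))`. -/
theorem gal_specialization_embeds {K L : Type*} [Field K] [Field L] [Algebra K L]
    (n : ℕ) (φ : FractionRing (MvPolynomial (Fin n) K) →ₐ[K] L)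
    (g : Polynomial (FractionRing (MvPolynomial (Fin n) K)))
    (hsep : (g.map (φ : FractionRing (MvPolynomial (Fin n) K) →+* L)).Separable) :
    ∃ ψ : (g.map (φ : FractionRing (MvPolynomial (Fin n) K) →+* L)).Gal →* g.Gal,
      Function.Injective ψ := by
  set F := FractionRing (MvPolynomial (Fin n) K)
  set φ' : F →+* L := (φ : F →+* L)
  set p : L[X] := g.map φ' with hp
  letI : Algebra F L := φ'.toAlgebra
  set N := p.SplittingField
  have hmapeq : algebraMap F N = (algebraMap L N).comp φ' :=
    IsScalarTower.algebraMap_eq F L N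
  have hsplits : (g.map (algebraMap F N)).Splits := by
    rw [hmapeq, ← Polynomial.map_map]
    exact SplittingField.splits p
  haveI : Fact ((g.map (algebraMap F N)).Splits) := ⟨hsplits⟩
  -- restriction of scalars as a group hom
  let r : p.Gal →* (N ≃ₐ[F] N) :=
    { toFun := fun τ => AlgEquiv.restrictScalars F τ
      map_one' := rfl
      map_mul' := fun _ _ => rfl }
  refine ⟨(Polynomial.Gal.restrict g N).comp r, ?_⟩
  rw [injective_iff_map_eq_one]
  intro τ hτ
  -- τ fixes all the roots of g (= roots of p) in N
  have hroots : ∀ x ∈ g.rootSet N, τ x = x := by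
    intro x hx
    have key := Polynomial.Gal.restrict_smul (p := g) (r τ) ⟨x, hx⟩
    rw [show Polynomial.Gal.restrict g N (r τ) = 1 from hτ, one_smul] at key
    exact key.symm
  -- root sets coincide
  have hrs : p.rootSet N = g.rootSet N := by
    simp only [rootSet, aroots, hp, Polynomial.map_map, hmapeq]
    classical exact congrArg (fun f => (((g.map f).roots.toFinset : Finset N) : Set N)) hmapeq.symm
  -- N is generated over L by the roots of p
  have hadj : Algebra.adjoin L (p.rootSet N) = ⊤ :=
    IsSplittingField.adjoin_rootSet N p
  have : τ.toAlgHom = AlgHom.id L N := by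
    apply AlgHom.ext_of_adjoin_eq_top hadj
    intro x hx
    rw [hrs] at hx
    exact hroots x hx
  ext x
  exact AlgHom.ext_iff.mp this x
end
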